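/- arXiv:1809.00328 — 7 statements merged into one kernel-verified Lean document; each statement's English description precedes it below -/
import Mathlib

section
/- Let E be a real normed space, e ∈ E with ‖e‖ = 1, and e' ∈ E with ‖e'‖ = 1 and ‖e + e'‖ = 2. Then for every real r > 0, ‖r•e + e'‖ = r + 1. -/
theorem norm_smul_add_smul_of_norm_add_eq {E : Type*} [NormedAddCommGroup E] [NormedSpace ℝ E]
    {x y : E} (h : ‖x + y‖ = ‖x‖ + ‖y‖) {a b : ℝ} (ha : 0 ≤ a) (hb : 0 ≤ b) :
    ‖a • x + b • y‖ = a * ‖x‖ + b * ‖y‖ := by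
  wlog hab : a ≤ b generalizing x y a b
  · rw [add_comm, add_comm (a * _)]
    exact this (by rwa [add_comm, add_comm ‖y‖]) hb ha (le_of_not_ge hab)
  have upper : ‖a • x + b • y‖ ≤ a * ‖x‖ + b * ‖y‖ := by
    simpa [norm_smul, abs_of_nonneg ha, abs_of_nonneg hb] using norm_add_le (a • x) (b • y)
  -- Comparing with the larger multiple `b • (x + y)` leaves the nonnegative coefficient `b - a`.
  have lower : b * (‖x‖ + ‖y‖) ≤ ‖a • x + b • y‖ + (b - a) * ‖x‖ := by
    calc b * (‖x‖ + ‖y‖) = ‖b • (x + y)‖ := by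
          rw [norm_smul, h, Real.norm_of_nonneg hb]
      _ = ‖(a • x + b • y) + (b - a) • x‖ := by congr 1; module
      _ ≤ ‖a • x + b • y‖ + ‖(b - a) • x‖ := norm_add_le _ _
      _ = ‖a • x + b • y‖ + (b - a) * ‖x‖ := by
          rw [norm_smul, Real.norm_of_nonneg (sub_nonneg.2 hab)]
  linarith

theorem norm_smul_add_of_mem_st
    {E : Type*} [NormedAddCommGroup E] [NormedSpace ℝ E]
    (e e' : E) (he : ‖e‖ = 1) (he' : ‖e'‖ = 1) (h : ‖e + e'‖ = 2)
    (r : ℝ) (hr : 0 < r) :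
    ‖r • e + e'‖ = r + 1 := by
  have h_add : ‖e + e'‖ = ‖e‖ + ‖e'‖ := by rw [h, he, he']; norm_num
  simpa [he, he'] using norm_smul_add_smul_of_norm_add_eq h_add hr.le zero_le_one
end

section
/- Let X be a compact Hausdorff topological space and E a real normed space. For any continuous function f : X → E and any ε > 0, there exist n ∈ ℕ, continuous real-valued functions f₁, …, fₙ : X → ℝ, and elements e₁, …, eₙ ∈ E such that for all x ∈ X, ‖∑ᵢ fᵢ(x)•eᵢ − f(x)‖ ≤ ε. -/
open Function

theorem exists_finite_sum_approx
    {X : Type*} [TopologicalSpace X] [CompactSpace X] [T2Space X]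
    {E : Type*} [NormedAddCommGroup E] [NormedSpace ℝ E]
    (f : C(X, E)) (ε : ℝ) (hε : 0 < ε) :
    ∃ (n : ℕ) (g : Fin n → C(X, ℝ)) (e : Fin n → E),
      ∀ x : X, ‖(∑ i : Fin n, g i x • e i) - f x‖ ≤ ε := by
  set V : X → Set X := fun z => {y | ‖f y - f z‖ < ε} with hV
  have hVopen : ∀ z, IsOpen (V z) := fun z =>
    isOpen_lt (by continuity) continuous_const
  have hVcover : (Set.univ : Set X) ⊆ ⋃ z, V z := fun x _ =>
    Set.mem_iUnion.2 ⟨x, by simp [hV, hε]⟩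
  obtain ⟨t, ht⟩ := isCompact_univ.elim_finite_subcover V hVopen hVcover
  set n := t.card with hn
  set φ : Fin n → X := fun i => (t.equivFin.symm i : X) with hφdef
  have hφ : (Set.univ : Set X) ⊆ ⋃ i, V (φ i) := by
    intro x hx
    obtain ⟨z, hzt, hz⟩ := Set.mem_iUnion₂.1 (ht hx)
    refine Set.mem_iUnion.2 ⟨t.equivFin ⟨z, hzt⟩, ?_⟩
    simpa [hφdef] using hz
  obtain ⟨ρ, hρ⟩ := PartitionOfUnity.exists_isSubordinate (ι := Fin n)
    isClosed_univ (fun i => V (φ i)) (fun i => hVopen _) hφ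
  refine ⟨n, fun i => ρ i, fun i => f (φ i), fun x => ?_⟩
  have hsum : ∑ i : Fin n, ρ i x = 1 := by
    rw [← finsum_eq_sum_of_fintype]
    exact ρ.sum_eq_one (Set.mem_univ x)
  have key : (∑ i : Fin n, ρ i x • f (φ i)) - f x
      = ∑ i : Fin n, ρ i x • (f (φ i) - f x) := by
    simp only [smul_sub, Finset.sum_sub_distrib, ← Finset.sum_smul, hsum, one_smul]
  rw [key]
  calc ‖∑ i : Fin n, ρ i x • (f (φ i) - f x)‖
      ≤ ∑ i : Fin n, ‖ρ i x • (f (φ i) - f x)‖ := norm_sum_le _ _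
    _ ≤ ∑ i : Fin n, ρ i x * ε := by
        refine Finset.sum_le_sum fun i _ => ?_
        rw [norm_smul, Real.norm_eq_abs, abs_of_nonneg (ρ.nonneg i x)]
        rcases eq_or_ne (ρ i x) 0 with h | h
        · simp [h]
        · refine mul_le_mul_of_nonneg_left ?_ (ρ.nonneg i x)
          have hx : x ∈ V (φ i) := hρ i (subset_tsupport _ h)
          have : ‖f x - f (φ i)‖ < ε := hx
          rw [← norm_neg]; simpa using this.le
    _ = ε := by rw [← Finset.sum_mul, hsum, one_mul]
end

section
/- Let X be a compact Hausdorff space and E a real normed space. Then the linear span of functions of the form x ↦ g(x)•e, where g : X → ℝ is continuous and e ∈ E, is dense in C(X,E) with respect to the supremum norm. -/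
theorem dense_span_smul_continuousMap
    {X : Type*} [TopologicalSpace X] [CompactSpace X] [T2Space X]
    {E : Type*} [NormedAddCommGroup E] [NormedSpace ℝ E] :
    Dense (↑(Submodule.span ℝ
      {h : C(X, E) | ∃ (g : C(X, ℝ)) (e : E), ∀ x, h x = g x • e}) : Set C(X, E)) := by
  rw [Metric.dense_iff]
  intro f ε hε
  -- cover `X` by sets where `f` varies by less than `ε/2`
  set U : X → Set X := fun x => {y | ‖f y - f x‖ < ε / 2} with hU
  have hUopen : ∀ x, IsOpen (U x) := by
    intro x
    have : Continuous fun y => ‖f y - f x‖ := by continuity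
    exact isOpen_lt this continuous_const
  have hUmem : ∀ x, x ∈ U x := fun x => by simp [hU, half_pos hε]
  obtain ⟨t, ht⟩ := (isCompact_univ (X := X)).elim_finite_subcover U hUopen
    (fun x _ => Set.mem_iUnion.2 ⟨x, hUmem x⟩)
  -- reindex by `Fin n`
  let n := t.card
  let c : Fin n → X := fun i => (t.equivFin.symm i : X)
  have hcover : (Set.univ : Set X) ⊆ ⋃ i, U (c i) := by
    intro x hx
    obtain ⟨y, hyt, hy⟩ := Set.mem_iUnion₂.1 (ht hx)
    exact Set.mem_iUnion.2 ⟨t.equivFin ⟨y, hyt⟩, by simpa [c] using hy⟩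
  obtain ⟨φ, hφsupp, hφsum, hφmem, -⟩ :=
    exists_continuous_sum_one_of_isOpen_isCompact (fun i => hUopen (c i))
      isCompact_univ hcover
  -- the approximating function
  let h : C(X, E) := ∑ i, ⟨fun x => φ i x • f (c i), ((φ i).continuous.smul continuous_const)⟩
  refine ⟨h, Metric.mem_ball.2 ?_, ?_⟩
  · -- distance estimate
    rw [dist_comm, ContinuousMap.dist_lt_iff hε]
    intro x
    have hsum : ∑ i, φ i x = 1 := by
      have := hφsum (Set.mem_univ x)
      simpa using this
    have hfx : f x = ∑ i, φ i x • f x := by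
      rw [← Finset.sum_smul, hsum, one_smul]
    have hhx : h x = ∑ i, φ i x • f (c i) := by
      simp [h, ContinuousMap.sum_apply]
    rw [dist_eq_norm, hfx, hhx, ← Finset.sum_sub_distrib]
    have key : ∀ i, ‖φ i x • f x - φ i x • f (c i)‖ ≤ φ i x * (ε / 2) := by
      intro i
      rw [← smul_sub, norm_smul, Real.norm_eq_abs,
        abs_of_nonneg (hφmem i x).1]
      rcases eq_or_ne (φ i x) 0 with h0 | h0
      · simp [h0]
      · have hxU : x ∈ U (c i) := hφsupp i (subset_tsupport _ (by simpa using h0))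
        exact mul_le_mul_of_nonneg_left (le_of_lt hxU) (hφmem i x).1
    calc ‖∑ i, (φ i x • f x - φ i x • f (c i))‖
        ≤ ∑ i, ‖φ i x • f x - φ i x • f (c i)‖ := norm_sum_le _ _
      _ ≤ ∑ i, φ i x * (ε / 2) := Finset.sum_le_sum fun i _ => key i
      _ = (∑ i, φ i x) * (ε / 2) := by rw [Finset.sum_mul]
      _ = ε / 2 := by rw [hsum, one_mul]
      _ < ε := half_lt_self hε
  · -- membership in the span
    exact Submodule.sum_mem _ fun i _ =>
      Submodule.subset_span ⟨φ i, f (c i), fun x => rfl⟩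
end

section
/- Let E be a real normed space and R a T-set in E, i.e., a subset maximal with respect to the property that ‖e₁ + ⋯ + eₙ‖ = ‖e₁‖ + ⋯ + ‖eₙ‖ for all finite collections e₁,…,eₙ ∈ R. If w* is a norm-one continuous linear functional with w*(u) = ‖u‖ for all u ∈ R, then R = {u ∈ E : w*(u) = ‖u‖}. -/
def IsNormAdditive {E : Type*} [NormedAddCommGroup E] (S : Set E) : Prop :=
  ∀ (n : ℕ) (e : Fin n → E), (∀ i, e i ∈ S) → ‖∑ i, e i‖ = ∑ i, ‖e i‖

def IsTSet {E : Type*} [NormedAddCommGroup E] (S : Set E) : Prop :=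
  IsNormAdditive S ∧ ∀ S' : Set E, IsNormAdditive S' → S ⊆ S' → S' = S

theorem tset_eq_norming_set
    {E : Type*} [NormedAddCommGroup E] [NormedSpace ℝ E]
    (R : Set E) (hR : IsTSet R)
    (w : E →L[ℝ] ℝ) (hw : ‖w‖ = 1) (hwR : ∀ u ∈ R, w u = ‖u‖) :
    R = {u : E | w u = ‖u‖} := by
  have hadd : IsNormAdditive {u : E | w u = ‖u‖} := by
    intro n e he
    refine le_antisymm (norm_sum_le _ _) ?_
    calc ∑ i, ‖e i‖ = ∑ i, w (e i) := by
          exact Finset.sum_congr rfl fun i _ => (he i).symm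
      _ = w (∑ i, e i) := (map_sum w e Finset.univ).symm
      _ ≤ ‖w (∑ i, e i)‖ := le_abs_self _
      _ ≤ ‖w‖ * ‖∑ i, e i‖ := w.le_opNorm _
      _ = ‖∑ i, e i‖ := by rw [hw, one_mul]
  exact (hR.2 _ hadd (fun u hu => hwR u hu)).symm
end

section
/- Let X be a compact Hausdorff space, E a real normed space, S a T-set in E, and t ∈ X. Then the set (S,t) = {f ∈ C(X,E) : f(t) ∈ S and ‖f(t)‖ = ‖f‖_∞} satisfies: for all f₁, …, fₙ ∈ (S,t), ‖f₁ + ⋯ + fₙ‖_∞ = ‖f₁‖_∞ + ⋯ + ‖fₙ‖_∞. -/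
theorem tset_lift_norm_additive
    {X : Type*} [TopologicalSpace X] [CompactSpace X] [T2Space X]
    {E : Type*} [NormedAddCommGroup E] [NormedSpace ℝ E]
    (S : Set E) (hS : IsTSet S) (t : X)
    (n : ℕ) (f : Fin n → C(X, E))
    (hf : ∀ i, f i t ∈ S ∧ ‖f i t‖ = ‖f i‖) :
    ‖∑ i, f i‖ = ∑ i, ‖f i‖ := by
  apply le_antisymm (norm_sum_le _ _)
  calc ∑ i, ‖f i‖ = ∑ i, ‖f i t‖ := by
        exact Finset.sum_congr rfl fun i _ => ((hf i).2).symm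
    _ = ‖∑ i, f i t‖ := (hS.1 n (fun i => f i t) fun i => (hf i).1).symm
    _ = ‖(∑ i, f i) t‖ := by simp
    _ ≤ ‖∑ i, f i‖ := ContinuousMap.norm_coe_le_norm _ t
end

section
/- Let F be a real normed space, v₀ ∈ F with ‖v₀‖ = 1 such that {v₀} is a maximal convex subset of the unit sphere (equivalently St(v₀) = {v₀}), and w* a continuous linear functional with ‖w*‖ = 1 and w*(v₀) = 1. Then {u ∈ F : ‖u‖ = 1 and w*(u) = 1} = {v₀}. -/
theorem norming_set_eq_singleton
    {F : Type*} [NormedAddCommGroup F] [NormedSpace ℝ F]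
    (v₀ : F) (hv₀ : ‖v₀‖ = 1)
    (hSt : ∀ v : F, ‖v‖ = 1 → ‖v₀ + v‖ = 2 → v = v₀)
    (w : F →L[ℝ] ℝ) (hw : ‖w‖ = 1) (hwv₀ : w v₀ = 1) :
    {u : F | ‖u‖ = 1 ∧ w u = 1} = {v₀} := by
  ext u
  simp only [Set.mem_setOf_eq, Set.mem_singleton_iff]
  constructor
  · rintro ⟨hu, hwu⟩
    apply hSt u hu
    have hle : ‖v₀ + u‖ ≤ 2 := by
      calc ‖v₀ + u‖ ≤ ‖v₀‖ + ‖u‖ := norm_add_le _ _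
        _ = 2 := by rw [hv₀, hu]; norm_num
    have hge : (2 : ℝ) ≤ ‖v₀ + u‖ := by
      have := w.le_opNorm (v₀ + u)
      rw [hw, one_mul, map_add, hwv₀, hwu] at this
      rw [Real.norm_eq_abs] at this; have := le_trans (le_abs_self _) this; linarith
    linarith
  · rintro rfl
    exact ⟨hv₀, hwv₀⟩
end

section
/- Let F be a real normed space and v₀ ∈ F with ‖v₀‖ = 1. Then {u ∈ S(F) : ‖u + v₀‖ = 2} is the union of all maximal convex subsets of the unit sphere S(F) that contain v₀. -/
theorem st_eq_union_maximal_convex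
    {F : Type*} [NormedAddCommGroup F] [NormedSpace ℝ F]
    (v₀ : F) (hv₀ : ‖v₀‖ = 1) :
    {u : F | ‖u‖ = 1 ∧ ‖u + v₀‖ = 2} =
      ⋃₀ {M : Set F | M ⊆ {u : F | ‖u‖ = 1} ∧ Convex ℝ M ∧ v₀ ∈ M ∧
        ∀ M' : Set F, M' ⊆ {u : F | ‖u‖ = 1} → Convex ℝ M' → M ⊆ M' → M' = M} := by
  ext u
  simp only [Set.mem_setOf_eq, Set.mem_sUnion]
  constructor
  · rintro ⟨hu, huv⟩
    set S : Set F := {u : F | ‖u‖ = 1} with hS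
    set seg := segment ℝ u v₀ with hsegdef
    have hseg : seg ⊆ S := by
      rintro x ⟨a, b, ha, hb, hab, rfl⟩
      have key : ∀ c d : ℝ, 0 ≤ c → 0 ≤ d → c + d = 1 → ‖c • u + d • v₀‖ ≤ 1 := by
        intro c d hc hd hcd
        calc ‖c • u + d • v₀‖ ≤ ‖c • u‖ + ‖d • v₀‖ := norm_add_le _ _
          _ = c + d := by
            rw [norm_smul, norm_smul, hu, hv₀, Real.norm_eq_abs, Real.norm_eq_abs,
              abs_of_nonneg hc, abs_of_nonneg hd]; ring
          _ = 1 := hcd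
      have h1 := key a b ha hb hab
      have h2 := key b a hb ha (by linarith)
      have h3 : (a • u + b • v₀) + (b • u + a • v₀) = u + v₀ := by
        have : (a • u + b • v₀) + (b • u + a • v₀) = (a + b) • u + (a + b) • v₀ := by
          module
        rw [this, hab, one_smul, one_smul]
      have h4 : (2 : ℝ) ≤ ‖a • u + b • v₀‖ + ‖b • u + a • v₀‖ := by
        calc (2 : ℝ) = ‖u + v₀‖ := huv.symm
          _ = ‖(a • u + b • v₀) + (b • u + a • v₀)‖ := by rw [h3]
          _ ≤ _ := norm_add_le _ _
      show ‖a • u + b • v₀‖ = 1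
      linarith
    have hsegT : seg ∈ {C : Set F | C ⊆ S ∧ Convex ℝ C ∧ seg ⊆ C} :=
      ⟨hseg, convex_segment _ _, subset_rfl⟩
    have hub : ∀ c ⊆ {C : Set F | C ⊆ S ∧ Convex ℝ C ∧ seg ⊆ C},
        IsChain (· ⊆ ·) c → c.Nonempty →
        ∃ ub ∈ {C : Set F | C ⊆ S ∧ Convex ℝ C ∧ seg ⊆ C}, ∀ s ∈ c, s ⊆ ub := by
      intro c hc hchain hcne
      refine ⟨⋃₀ c, ⟨?_, ?_, ?_⟩, fun s hs => Set.subset_sUnion_of_mem hs⟩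
      · rintro x ⟨A, hA, hxA⟩
        exact (hc hA).1 hxA
      · rintro x ⟨A, hA, hxA⟩ y ⟨B, hB, hyB⟩ a b ha hb hab
        rcases hchain.total hA hB with hAB | hBA
        · exact Set.subset_sUnion_of_mem hB ((hc hB).2.1 (hAB hxA) hyB ha hb hab)
        · exact Set.subset_sUnion_of_mem hA ((hc hA).2.1 hxA (hBA hyB) ha hb hab)
      · obtain ⟨A, hA⟩ := hcne
        exact ((hc hA).2.2).trans (Set.subset_sUnion_of_mem hA)
    obtain ⟨M, hsegM, hMmem, hMmax⟩ :=
      zorn_subset_nonempty {C : Set F | C ⊆ S ∧ Convex ℝ C ∧ seg ⊆ C} hub seg hsegT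
    obtain ⟨hMS, hMconv, hMseg⟩ := hMmem
    refine ⟨M, ⟨hMS, hMconv, hMseg (right_mem_segment ℝ u v₀), ?_⟩,
      hsegM (left_mem_segment ℝ u v₀)⟩
    intro M' hM'S hM'conv hMM'
    exact Set.Subset.antisymm (hMmax ⟨hM'S, hM'conv, hMseg.trans hMM'⟩ hMM') hMM'
  · rintro ⟨M, ⟨hMS, hMconv, hv₀M, _⟩, huM⟩
    have hu : ‖u‖ = 1 := hMS huM
    have hmid : (1/2 : ℝ) • u + (1/2 : ℝ) • v₀ ∈ M :=
      hMconv huM hv₀M (by norm_num) (by norm_num) (by norm_num)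
    have hmidn : ‖(1/2 : ℝ) • u + (1/2 : ℝ) • v₀‖ = 1 := hMS hmid
    have : (1/2 : ℝ) • u + (1/2 : ℝ) • v₀ = (1/2 : ℝ) • (u + v₀) := by module
    rw [this, norm_smul, Real.norm_eq_abs] at hmidn
    constructor
    · exact hu
    · nlinarith [abs_of_nonneg (show (0:ℝ) ≤ 1/2 by norm_num)]
end
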